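/- arXiv:1102.5212 — 2 statements merged into one kernel-verified Lean document; each statement's English description precedes it below -/
import Mathlib

section
/- Let {θ_m}_{m≥1} be an orthonormal sequence of eigenfunctions of R_XX with eigenvalues λ_Xm > 0 whose closed span is ker(R_XX)^⊥, and let {e_j}_{j≥1} be any orthonormal basis of L²(T₂). Then g ∈ L²(T₁×T₂) lies in the range of Γ_XX if and only if g ⊥ ker(Γ_XX) and ∑_{m,j=1}^∞ λ_Xm^{-2} ⟨g, θ_m⊗e_j⟩² < ∞. -/
open MeasureTheory Filter
open scoped RealInnerProductSpace ENNReal NNReal Topology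

noncomputable section

namespace FLR

/-- Lebesgue measure on the compact interval `[a, b] ⊆ ℝ`. -/
abbrev leb (a b : ℝ) : Measure ℝ := volume.restrict (Set.Icc a b)

variable {α β Ω : Type*} [MeasurableSpace α] [MeasurableSpace β] [MeasurableSpace Ω]

/-- The elementary tensor `u ⊗ v`, i.e. `(u ⊗ v)(s,t) = u s * v t`, as an element of
`L²(μ × ν)`. -/
def tensor {μ : Measure α} {ν : Measure β} [SigmaFinite μ] [SigmaFinite ν]
    (u : Lp ℝ 2 μ) (v : Lp ℝ 2 ν) : Lp ℝ 2 (μ.prod ν) :=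
  MemLp.toLp (fun p : α × β => u p.1 * v p.2) (by
    have hm : AEStronglyMeasurable (fun p : α × β => u p.1 * v p.2) (μ.prod ν) :=
      (Lp.aestronglyMeasurable u).comp_fst.mul (Lp.aestronglyMeasurable v).comp_snd
    rw [memLp_two_iff_integrable_sq hm]
    have h : (fun p : α × β => (u p.1 * v p.2) ^ 2)
        = fun p : α × β => ((u : α → ℝ) p.1) ^ 2 * ((v : β → ℝ) p.2) ^ 2 := by
      funext p; ring
    rw [h]
    exact (Lp.memLp u).integrable_sq.mul_prod (Lp.memLp v).integrable_sq)

/-- Cross-covariance operator `R_{ZW} u = E[⟨u, W⟩ Z]` of a pair of random elements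
(a Bochner integral). -/
def covOp {μ : Measure α} {ν : Measure β} (P : Measure Ω)
    (Z : Ω → Lp ℝ 2 μ) (W : Ω → Lp ℝ 2 ν) (u : Lp ℝ 2 ν) : Lp ℝ 2 μ :=
  ∫ ω, ⟪u, W ω⟫ • Z ω ∂P

/-- The integral operator `(T_b u)(t) = ∫ b(s,t) u(s) ds` with kernel `b ∈ L²(μ × ν)`;
it maps `L²(μ)` into `L²(ν)`. -/
def intOp {μ : Measure α} {ν : Measure β} [SigmaFinite μ] [SigmaFinite ν]
    (b : Lp ℝ 2 (μ.prod ν)) (u : Lp ℝ 2 μ) : Lp ℝ 2 ν := by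
  classical
  exact if h : MemLp (fun t : β => ∫ s, b (s, t) * u s ∂μ) 2 ν then h.toLp _ else 0

/-! The functions `θ m ⊗ e j` are orthonormal eigenvectors of `Γ` with eigenvalues `λ m ≠ 0`.
Elementary tensors span a dense subspace of `L²(T₁ × T₂)` (a function orthogonal to the
indicators of all rectangles integrates to zero over every measurable set), so `Γ` is symmetric;
and `Γ` kills every `h` orthogonal to all `θ m ⊗ e j`, because `⟪Γ h, u ⊗ v⟫ = ⟪h, R u ⊗ v⟫`
with `R u ∈ (ker R)ᗮ = closure (span θ)`. For such an operator `g = Γ f` forces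
`⟪g, θ m ⊗ e j⟫ = λ m ⟪f, θ m ⊗ e j⟫`, so the series converges by Bessel's inequality;
conversely `f = ∑ (λ m)⁻¹ ⟪g, θ m ⊗ e j⟫ • θ m ⊗ e j` converges, and `g - Γ f` lies in
`ker Γ ∩ (ker Γ)ᗮ = 0`. -/
section Hilbert

variable {H : Type*} [NormedAddCommGroup H] [InnerProductSpace ℝ H]

theorem _root_.LinearMap.IsSymmetric.apply_mem_orthogonal_ker {T : H →ₗ[ℝ] H}
    (hT : T.IsSymmetric) (x : H) : T x ∈ (LinearMap.ker T)ᗮ := by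
  rw [← hT.orthogonal_range]
  exact Submodule.le_orthogonal_orthogonal _ (LinearMap.mem_range_self T x)

theorem _root_.ContinuousLinearMap.isSymmetric_of_dense_span {S : Set H}
    (hS : Dense (Submodule.span ℝ S : Set H)) {T : H →L[ℝ] H}
    (hT : ∀ a ∈ S, ∀ b ∈ S, ⟪T a, b⟫ = ⟪a, T b⟫) : (T : H →ₗ[ℝ] H).IsSymmetric := by
  have hleft : ∀ a ∈ S, ∀ y, ⟪T a, y⟫ = ⟪a, T y⟫ := fun a ha =>
    DFunLike.congr_fun <| ContinuousLinearMap.ext_on (f := innerSL ℝ (T a))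
      (g := (innerSL ℝ a).comp T) hS (hT a ha)
  intro x y
  have := ContinuousLinearMap.ext_on (f := (innerSL ℝ y).comp T) (g := innerSL ℝ (T y)) hS
    fun a ha => by
      rw [ContinuousLinearMap.comp_apply, innerSL_apply_apply, innerSL_apply_apply,
        real_inner_comm, hleft a ha, real_inner_comm]
  simpa [real_inner_comm] using congr($this x)

variable [CompleteSpace H] {ι : Type*}

theorem _root_.LinearMap.IsSymmetric.mem_range_iff_of_orthonormal_eigenvectors
    {T : H →ₗ[ℝ] H} (hT : T.IsSymmetric) {F : ι → H} (hF : Orthonormal ℝ F) {c : ι → ℝ}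
    (hc : ∀ i, c i ≠ 0) (hTF : ∀ i, T (F i) = c i • F i) (hker : ∀ h, (∀ i, ⟪h, F i⟫ = 0) → T h = 0) (g : H) :
    g ∈ Set.range T ↔
      g ∈ (LinearMap.ker T)ᗮ ∧ Summable fun i => (c i)⁻¹ ^ 2 * ⟪g, F i⟫ ^ 2 := by
  classical
  have hcoeff : ∀ x i, ⟪T x, F i⟫ = c i * ⟪x, F i⟫ := fun x i => by
    rw [hT, hTF, real_inner_smul_right]
  constructor
  · rintro ⟨f, rfl⟩
    refine ⟨LinearMap.IsSymmetric.apply_mem_orthogonal_ker hT f,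
      (hF.inner_products_summable f).congr fun i => ?_⟩
    rw [hcoeff, real_inner_comm, Real.norm_eq_abs, sq_abs, mul_pow, ← mul_assoc, ← mul_pow,
      inv_mul_cancel₀ (hc i), one_pow, one_mul]
  · rintro ⟨hg, hsum⟩
    set a : ι → ℝ := fun i => (c i)⁻¹ * ⟪g, F i⟫
    have ha : Summable fun i => a i • F i := by
      refine (hF.orthogonalFamily.summable_iff_norm_sq_summable a).mpr (hsum.congr fun i => ?_)
      simp [a, mul_pow]
    set f := ∑' i, a i • F i
    have hf : ∀ i, ⟪f, F i⟫ = a i := fun i => by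
      rw [real_inner_comm, ← innerSL_apply_apply, ContinuousLinearMap.map_tsum _ ha]
      simp [orthonormal_iff_ite.mp hF]
    have hTf : ∀ i, ⟪T f, F i⟫ = ⟪g, F i⟫ := fun i => by
      rw [hcoeff, hf, ← mul_assoc, mul_inv_cancel₀ (hc i), one_mul]
    have hker' : g - T f ∈ LinearMap.ker T :=
      hker _ fun i => by rw [inner_sub_left, hTf, sub_self]
    have hperp : g - T f ∈ (LinearMap.ker T)ᗮ :=
      sub_mem hg (LinearMap.IsSymmetric.apply_mem_orthogonal_ker hT f)
    have hzero := (Submodule.orthogonal_disjoint _).le_bot ⟨hker', hperp⟩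
    exact ⟨f, (sub_eq_zero.mp ((Submodule.mem_bot ℝ).mp hzero)).symm⟩

end Hilbert

section Tensor

variable {μ : Measure α} {ν : Measure β} [SigmaFinite μ] [SigmaFinite ν]

theorem coeFn_tensor (u : Lp ℝ 2 μ) (v : Lp ℝ 2 ν) :
    ⇑(tensor u v) =ᵐ[μ.prod ν] fun p => u p.1 * v p.2 :=
  MemLp.coeFn_toLp _

theorem coeFn_tensor_of_ae_eq {u : Lp ℝ 2 μ} {v : Lp ℝ 2 ν} {f : α → ℝ} {g : β → ℝ}
    (hu : ⇑u =ᵐ[μ] f) (hv : ⇑v =ᵐ[ν] g) :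
    ⇑(tensor u v) =ᵐ[μ.prod ν] fun p => f p.1 * g p.2 := by
  filter_upwards [coeFn_tensor u v, Measure.quasiMeasurePreserving_fst.ae_eq_comp hu,
    Measure.quasiMeasurePreserving_snd.ae_eq_comp hv] with p hp hfst hsnd
  rw [hp]
  exact congr_arg₂ (· * ·) hfst hsnd

theorem tensor_add_left (u u' : Lp ℝ 2 μ) (v : Lp ℝ 2 ν) :
    tensor (u + u') v = tensor u v + tensor u' v := by
  ext1
  filter_upwards [coeFn_tensor_of_ae_eq (Lp.coeFn_add u u') (ae_eq_refl v),
    Lp.coeFn_add (tensor u v) (tensor u' v), coeFn_tensor u v, coeFn_tensor u' v]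
    with p h h' hu hu'
  simp only [h, h', hu, hu', Pi.add_apply, add_mul]

theorem tensor_smul_left (c : ℝ) (u : Lp ℝ 2 μ) (v : Lp ℝ 2 ν) :
    tensor (c • u) v = c • tensor u v := by
  ext1
  filter_upwards [coeFn_tensor_of_ae_eq (Lp.coeFn_smul c u) (ae_eq_refl v),
    Lp.coeFn_smul c (tensor u v), coeFn_tensor u v] with p h h' hu
  simp only [h, h', hu, Pi.smul_apply, smul_eq_mul, mul_assoc]

theorem tensor_add_right (u : Lp ℝ 2 μ) (v v' : Lp ℝ 2 ν) :
    tensor u (v + v') = tensor u v + tensor u v' := by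
  ext1
  filter_upwards [coeFn_tensor_of_ae_eq (ae_eq_refl u) (Lp.coeFn_add v v'),
    Lp.coeFn_add (tensor u v) (tensor u v'), coeFn_tensor u v, coeFn_tensor u v']
    with p h h' hv hv'
  simp only [h, h', hv, hv', Pi.add_apply, mul_add]

theorem tensor_smul_right (c : ℝ) (u : Lp ℝ 2 μ) (v : Lp ℝ 2 ν) :
    tensor u (c • v) = c • tensor u v := by
  ext1
  filter_upwards [coeFn_tensor_of_ae_eq (ae_eq_refl u) (Lp.coeFn_smul c v),
    Lp.coeFn_smul c (tensor u v), coeFn_tensor u v] with p h h' hv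
  simp only [h, h', hv, Pi.smul_apply, smul_eq_mul]
  ring

theorem inner_tensor (u u' : Lp ℝ 2 μ) (v v' : Lp ℝ 2 ν) :
    ⟪tensor u v, tensor u' v'⟫ = ⟪u, u'⟫ * ⟪v, v'⟫ := by
  have h : (fun p => ⟪tensor u v p, tensor u' v' p⟫)
      =ᵐ[μ.prod ν] fun p => (u p.1 * u' p.1) * (v p.2 * v' p.2) := by
    filter_upwards [coeFn_tensor u v, coeFn_tensor u' v'] with p hp hp'
    rw [hp, hp', Real.inner_apply]
    ring
  rw [L2.inner_def, integral_congr_ae h,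
    integral_prod_mul (fun s => u s * u' s) (fun t => v t * v' t), L2.inner_def, L2.inner_def]
  simp only [Real.inner_apply]

theorem norm_tensor (u : Lp ℝ 2 μ) (v : Lp ℝ 2 ν) : ‖tensor u v‖ = ‖u‖ * ‖v‖ := by
  rw [← sq_eq_sq₀ (norm_nonneg _) (by positivity), mul_pow, ← real_inner_self_eq_norm_sq,
    ← real_inner_self_eq_norm_sq, ← real_inner_self_eq_norm_sq, inner_tensor]

def tensorCLM : Lp ℝ 2 μ →L[ℝ] Lp ℝ 2 ν →L[ℝ] Lp ℝ 2 (μ.prod ν) :=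
  LinearMap.mkContinuous₂
    (LinearMap.mk₂ ℝ tensor tensor_add_left tensor_smul_left tensor_add_right tensor_smul_right :
      Lp ℝ 2 μ →ₗ[ℝ] Lp ℝ 2 ν →ₗ[ℝ] Lp ℝ 2 (μ.prod ν))
    1 fun u v => by rw [one_mul]; exact (norm_tensor u v).le

theorem inner_tensor_eq_zero_of_mem_closure_span {s : Set (Lp ℝ 2 μ)} {t : Set (Lp ℝ 2 ν)}
    {h : Lp ℝ 2 (μ.prod ν)} (hst : ∀ u ∈ s, ∀ v ∈ t, ⟪h, tensor u v⟫ = 0) {u : Lp ℝ 2 μ}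
    (hu : u ∈ closure (Submodule.span ℝ s : Set (Lp ℝ 2 μ))) {v : Lp ℝ 2 ν}
    (hv : v ∈ closure (Submodule.span ℝ t : Set (Lp ℝ 2 ν))) : ⟪h, tensor u v⟫ = 0 := by
  have hleft : ∀ u' ∈ s, ⟪h, tensor u' v⟫ = 0 := fun u' hu' =>
    ((innerSL ℝ h).comp (tensorCLM u')).eqOn_closure_span (g := 0) (hst u' hu') hv
  exact ((innerSL ℝ h).comp (tensorCLM.flip v)).eqOn_closure_span (g := 0) hleft hu

theorem _root_.Orthonormal.tensor {ι κ : Type*} {u : ι → Lp ℝ 2 μ} {v : κ → Lp ℝ 2 ν}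
    (hu : Orthonormal ℝ u) (hv : Orthonormal ℝ v) :
    Orthonormal ℝ fun ij : ι × κ => tensor (u ij.1) (v ij.2) := by
  classical
  rw [orthonormal_iff_ite] at *
  rintro ⟨i, j⟩ ⟨i', j'⟩
  rw [inner_tensor, hu, hv, ite_zero_mul_ite_zero, one_mul]
  simp only [Prod.mk.injEq]

theorem tensor_indicatorConstLp_one {s : Set α} {t : Set β} (hs : MeasurableSet s)
    (hμs : μ s ≠ ∞) (ht : MeasurableSet t) (hνt : ν t ≠ ∞) :
    tensor (indicatorConstLp 2 hs hμs (1 : ℝ)) (indicatorConstLp 2 ht hνt (1 : ℝ)) =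
      indicatorConstLp 2 (hs.prod ht)
        (by rw [Measure.prod_prod]; exact ENNReal.mul_ne_top hμs hνt) (1 : ℝ) := by
  ext1
  filter_upwards [coeFn_tensor_of_ae_eq (indicatorConstLp_coeFn (hs := hs) (hμs := hμs))
    (indicatorConstLp_coeFn (hs := ht) (hμs := hνt)),
    indicatorConstLp_coeFn (p := 2) (hs := hs.prod ht) (c := (1 : ℝ))] with p h h'
  rw [h, h']
  exact Set.indicator_prod_one.symm

end Tensor

theorem _root_.MeasureTheory.Integrable.ae_eq_zero_of_forall_setIntegral_prod_eq_zero
    {E : Type*} [NormedAddCommGroup E] [NormedSpace ℝ E] [CompleteSpace E]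
    {ρ : Measure (α × β)} {f : α × β → E} (hf : Integrable f ρ)
    (h : ∀ ⦃s⦄, MeasurableSet s → ∀ ⦃t⦄, MeasurableSet t → ∫ x in s ×ˢ t, f x ∂ρ = 0) :
    f =ᵐ[ρ] 0 := by
  have huniv : ∫ x, f x ∂ρ = 0 := by simpa using h .univ .univ
  have hall : ∀ u, MeasurableSet u → ∫ x in u, f x ∂ρ = 0 := by
    intro u hu
    induction u, hu using MeasurableSpace.induction_on_inter generateFrom_prod.symm
      isPiSystem_prod with
    | empty => simp
    | basic u hu => obtain ⟨s, hs, t, ht, rfl⟩ := hu; exact h hs ht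
    | compl u hu ihu => rw [setIntegral_compl hu hf, huniv, ihu, sub_zero]
    | iUnion u hdisj hmeas ih =>
      rw [integral_iUnion hmeas hdisj hf.integrableOn]
      simp only [ih, tsum_zero]
  exact hf.ae_eq_zero_of_forall_setIntegral_eq_zero fun u hu _ => hall u hu

section Dense

variable {μ : Measure α} {ν : Measure β} [IsFiniteMeasure μ] [IsFiniteMeasure ν]

theorem eq_zero_of_forall_inner_tensor_eq_zero {h : Lp ℝ 2 (μ.prod ν)}
    (hh : ∀ u v, ⟪tensor u v, h⟫ = 0) : h = 0 := by
  rw [Lp.eq_zero_iff_ae_eq_zero]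
  refine ((Lp.memLp h).integrable one_le_two).ae_eq_zero_of_forall_setIntegral_prod_eq_zero
    fun s hs t ht => ?_
  rw [← L2.inner_indicatorConstLp_one (hs.prod ht) (measure_ne_top _ _) h,
    ← tensor_indicatorConstLp_one hs (measure_ne_top μ s) ht (measure_ne_top ν t)]
  exact hh _ _

theorem dense_span_tensor :
    Dense (Submodule.span ℝ (Set.range (Function.uncurry (tensor (μ := μ) (ν := ν)))) :
      Set (Lp ℝ 2 (μ.prod ν))) := by
  rw [Submodule.dense_iff_topologicalClosure_eq_top, Submodule.topologicalClosure_eq_top_iff,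
    Submodule.eq_bot_iff]
  exact fun h hh => eq_zero_of_forall_inner_tensor_eq_zero fun u v =>
    Submodule.inner_right_of_mem_orthogonal
      (Submodule.subset_span (Set.mem_range_self (u, v))) hh

end Dense

theorem mem_range_gamma_iff_general
    (a₁ b₁ a₂ b₂ : ℝ)
    (Rxx : Lp ℝ 2 (leb a₁ b₁) →L[ℝ] Lp ℝ 2 (leb a₁ b₁))
    (hsa : ∀ u w, ⟪Rxx u, w⟫ = ⟪u, Rxx w⟫)
    (θ : ℕ → Lp ℝ 2 (leb a₁ b₁)) (hθon : Orthonormal ℝ θ)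
    (lamX : ℕ → ℝ) (hlamX : ∀ m, 0 < lamX m)
    (hθeig : ∀ m, Rxx (θ m) = lamX m • θ m)
    (hθspan : (Submodule.span ℝ (Set.range θ)).topologicalClosure = (LinearMap.ker (Rxx : _ →ₗ[ℝ] Lp ℝ 2 (leb a₁ b₁)))ᗮ)
    (e : ℕ → Lp ℝ 2 (leb a₂ b₂)) (heon : Orthonormal ℝ e)
    (hebasis : (Submodule.span ℝ (Set.range e)).topologicalClosure = ⊤)
    (Γ : Lp ℝ 2 ((leb a₁ b₁).prod (leb a₂ b₂)) →L[ℝ] Lp ℝ 2 ((leb a₁ b₁).prod (leb a₂ b₂)))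
    (hΓ : ∀ (u : Lp ℝ 2 (leb a₁ b₁)) (v : Lp ℝ 2 (leb a₂ b₂)),
      Γ (tensor u v) = tensor (Rxx u) v) :
    ∀ g : Lp ℝ 2 ((leb a₁ b₁).prod (leb a₂ b₂)),
      g ∈ Set.range Γ ↔
        (g ∈ (LinearMap.ker (Γ : _ →ₗ[ℝ] Lp ℝ 2 ((leb a₁ b₁).prod (leb a₂ b₂))))ᗮ ∧
          Summable (fun mj : ℕ × ℕ =>
            (lamX mj.1) ⁻¹ ^ 2 * ⟪g, tensor (θ mj.1) (e mj.2)⟫ ^ 2)) := by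
  have hΓsymm := Γ.isSymmetric_of_dense_span dense_span_tensor <| by
    rintro _ ⟨⟨u, v⟩, rfl⟩ _ ⟨⟨u', v'⟩, rfl⟩
    simp only [Function.uncurry_apply_pair, hΓ, inner_tensor, hsa]
  have hΓker : ∀ h, (∀ mj : ℕ × ℕ, ⟪h, tensor (θ mj.1) (e mj.2)⟫ = 0) → Γ h = 0 := by
    refine fun h hh => eq_zero_of_forall_inner_tensor_eq_zero fun u v => ?_
    calc ⟪tensor u v, Γ h⟫ = ⟪h, tensor (Rxx u) v⟫ := by
          rw [← hΓ, real_inner_comm]; exact hΓsymm _ _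
      _ = 0 := inner_tensor_eq_zero_of_mem_closure_span (s := Set.range θ) (t := Set.range e)
          ?_ ?_ ?_
    · rintro _ ⟨m, rfl⟩ _ ⟨j, rfl⟩
      exact hh (m, j)
    · rw [← Submodule.topologicalClosure_coe, hθspan]
      exact LinearMap.IsSymmetric.apply_mem_orthogonal_ker hsa u
    · rw [← Submodule.topologicalClosure_coe, hebasis]
      trivial
  exact LinearMap.IsSymmetric.mem_range_iff_of_orthonormal_eigenvectors hΓsymm
    (hθon.tensor heon) (fun mj => (hlamX mj.1).ne')
    (fun mj => by rw [ContinuousLinearMap.coe_coe, hΓ, hθeig, tensor_smul_left]) hΓker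

/-- range of `Γ_XX`: let `R_XX` be a positive self-adjoint trace-class
operator on `L²(T₁)`, `{θ_m}` an orthonormal sequence of eigenfunctions of `R_XX` with
eigenvalues `λ_Xm > 0` whose closed span is `ker(R_XX)ᗮ`, and `{e_j}` any orthonormal basis
of `L²(T₂)`.  Then `g ∈ L²(T₁×T₂)` lies in the range of `Γ_XX` iff `g ⟂ ker(Γ_XX)` and
`∑_{m,j} λ_Xm⁻² ⟨g, θ_m ⊗ e_j⟩² < ∞`. -/
theorem mem_range_gamma_iff
    (a₁ b₁ a₂ b₂ : ℝ)
    (Rxx : Lp ℝ 2 (leb a₁ b₁) →L[ℝ] Lp ℝ 2 (leb a₁ b₁))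
    (hsa : ∀ u w, ⟪Rxx u, w⟫ = ⟪u, Rxx w⟫)
    (hpos : ∀ u, 0 ≤ ⟪Rxx u, u⟫)
    (hcompact : IsCompactOperator Rxx)
    (θ : ℕ → Lp ℝ 2 (leb a₁ b₁)) (hθon : Orthonormal ℝ θ)
    (lamX : ℕ → ℝ) (hlamX : ∀ m, 0 < lamX m)
    (htrace : Summable lamX)
    (hθeig : ∀ m, Rxx (θ m) = lamX m • θ m)
    (hθspan : (Submodule.span ℝ (Set.range θ)).topologicalClosure = (LinearMap.ker (Rxx : _ →ₗ[ℝ] Lp ℝ 2 (leb a₁ b₁)))ᗮ)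
    (e : ℕ → Lp ℝ 2 (leb a₂ b₂)) (heon : Orthonormal ℝ e)
    (hebasis : (Submodule.span ℝ (Set.range e)).topologicalClosure = ⊤)
    (Γ : Lp ℝ 2 ((leb a₁ b₁).prod (leb a₂ b₂)) →L[ℝ] Lp ℝ 2 ((leb a₁ b₁).prod (leb a₂ b₂)))
    (hΓ : ∀ (u : Lp ℝ 2 (leb a₁ b₁)) (v : Lp ℝ 2 (leb a₂ b₂)),
      Γ (tensor u v) = tensor (Rxx u) v) :
    ∀ g : Lp ℝ 2 ((leb a₁ b₁).prod (leb a₂ b₂)),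
      g ∈ Set.range Γ ↔
        (g ∈ (LinearMap.ker (Γ : _ →ₗ[ℝ] Lp ℝ 2 ((leb a₁ b₁).prod (leb a₂ b₂))))ᗮ ∧
          Summable (fun mj : ℕ × ℕ =>
            (lamX mj.1) ⁻¹ ^ 2 * ⟪g, tensor (θ mj.1) (e mj.2)⟫ ^ 2)) :=
  mem_range_gamma_iff_general a₁ b₁ a₂ b₂ Rxx hsa θ hθon lamX hlamX hθeig hθspan e heon hebasis Γ hΓ
end FLR
end
end

section
/- Assume Condition (C2). Then ∑_{m,j=1}^∞ (E[ξ_m ζ_j])²/(λ_Xm λ_Yj) < ∞, so that the operator R : L²(T₂) → L²(T₁) defined by R v = ∑_{m,j} (E[ξ_m ζ_j]/(λ_Xm λ_Yj)^{1/2}) ⟨φ_j, v⟩ θ_m is a well-defined Hilbert–Schmidt operator, and it satisfies R_XY = R_XX^{1/2} ∘ R ∘ R_YY^{1/2}. -/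
/-!
The map `u ↦ ⟪u, X⟫` from `L²(T₁)` to `L²(P)`, and its analogue for `Y`, turn covariances into
inner products: `⟪u, R_XY v⟫ = E[⟪u, X⟫ ⟪v, Y⟫]`. Both maps vanish on the kernels of `R_XX`,
`R_YY`, so they are determined by their values on the eigenvectors `θ m`, `φ j`; and
`λ_Xm = E[ξ_m²]` is bounded by the squared norm of the first map. Hence (C2) makes the coefficients
`E[ξ_m ζ_j] / √(λ_Xm λ_Yj)` square-summable, and a square-summable matrix with respect to two
orthonormal families is the matrix of a Hilbert–Schmidt operator `R`. A positive square root acts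
on an eigenvector of its square by the square root of the eigenvalue, so
`⟪R_XX^{1/2} u, R R_YY^{1/2} v⟫` expands into `∑ E[ξ_m ζ_j] ⟪θ m, u⟫ ⟪φ j, v⟫`, which sums to
`E[⟪u, X⟫ ⟪v, Y⟫]` by the expansions of the two maps.
-/

open MeasureTheory Filter
open scoped RealInnerProductSpace ENNReal NNReal Topology

noncomputable section

namespace Orthonormal

variable {ι E : Type*} [NormedAddCommGroup E] [InnerProductSpace ℝ E] {v : ι → E}

theorem summable_smul (hv : Orthonormal ℝ v) [CompleteSpace E] {c : ι → ℝ}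
    (hc : Summable fun i => c i ^ 2) : Summable fun i => c i • v i := by
  simpa [LinearIsometry.toSpanSingleton_apply] using
    (hv.orthogonalFamily.summable_iff_norm_sq_summable c).2 (by simpa using hc)

theorem inner_left_hasSum_smul (hv : Orthonormal ℝ v) {c : ι → ℝ} {S : E}
    (hS : HasSum (fun i => c i • v i) S) (k : ι) : ⟪v k, S⟫ = c k := by
  refine (((innerSL ℝ (v k)).hasSum hS).unique (hasSum_single k fun i hi => ?_)).trans ?_
  · simp [hv.2 (Ne.symm hi)]
  · simp [hv.1 k]

theorem hasSum_sq_of_hasSum_smul (hv : Orthonormal ℝ v) {c : ι → ℝ} {S : E}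
    (hS : HasSum (fun i => c i • v i) S) : HasSum (fun i => c i ^ 2) (‖S‖ ^ 2) := by
  rw [← real_inner_self_eq_norm_sq]
  simpa [real_inner_smul_right, real_inner_comm _ S, inner_left_hasSum_smul hv hS, sq]
    using (innerSL ℝ S).hasSum hS

end Orthonormal

theorem summable_of_norm_sum_sq_le {ι E : Type*} [NormedAddCommGroup E] [CompleteSpace E]
    {f : ι → E} {b : ι → ℝ} (hb : Summable b) (C : ℝ)
    (h : ∀ t : Finset ι, ‖∑ i ∈ t, f i‖ ^ 2 ≤ (∑ i ∈ t, b i) * C) : Summable f := by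
  refine summable_iff_vanishing_norm.2 fun ε hε => ?_
  obtain ⟨s, hs⟩ := summable_iff_vanishing_norm.1 hb (ε ^ 2 / (|C| + 1)) (by positivity)
  refine ⟨s, fun t ht => lt_of_pow_lt_pow_left₀ 2 hε.le ?_⟩
  calc ‖∑ i ∈ t, f i‖ ^ 2 ≤ (∑ i ∈ t, b i) * C := h t
    _ ≤ ‖∑ i ∈ t, b i‖ * (|C| + 1) := by
      rw [Real.norm_eq_abs]
      nlinarith [le_abs_self ((∑ i ∈ t, b i) * C), abs_mul (∑ i ∈ t, b i) C,
        abs_nonneg (∑ i ∈ t, b i)]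
    _ < ε ^ 2 := by
      have := hs t ht
      rwa [lt_div_iff₀ (by positivity)] at this

theorem inner_sq_le_norm_sq_mul_norm_sq {E : Type*} [NormedAddCommGroup E] [InnerProductSpace ℝ E]
    (x y : E) : ⟪x, y⟫ ^ 2 ≤ ‖x‖ ^ 2 * ‖y‖ ^ 2 := by
  rw [← mul_pow, ← sq_abs]
  exact pow_le_pow_left₀ (abs_nonneg _) (abs_real_inner_le_norm x y) 2

section MatrixOperator

open Finset

variable {ι κ E F : Type*} [NormedAddCommGroup E] [InnerProductSpace ℝ E]
  [NormedAddCommGroup F] [InnerProductSpace ℝ F] {θ : ι → E} {φ : κ → F}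

theorem Orthonormal.norm_sum_smul_inner_sq_le (hθ : Orthonormal ℝ θ) (hφ : Orthonormal ℝ φ)
    (a : ι × κ → ℝ) (w : F) (t : Finset (ι × κ)) :
    ‖∑ p ∈ t, (a p * ⟪φ p.2, w⟫) • θ p.1‖ ^ 2 ≤ (∑ p ∈ t, a p ^ 2) * ‖w‖ ^ 2 := by
  classical
  set x := ∑ p ∈ t, (a p * ⟪φ p.2, w⟫) • θ p.1 with hx_def
  have hx : ‖x‖ ^ 2 = ∑ p ∈ t, a p * (⟪θ p.1, x⟫ * ⟪φ p.2, w⟫) := by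
    rw [← real_inner_self_eq_norm_sq]
    nth_rw 1 [hx_def]
    simp only [sum_inner, real_inner_smul_left]
    exact sum_congr rfl fun p _ => by ring
  have hbessel : ∑ p ∈ t, (⟪θ p.1, x⟫ * ⟪φ p.2, w⟫) ^ 2 ≤ ‖x‖ ^ 2 * ‖w‖ ^ 2 := calc
    _ ≤ ∑ p ∈ t.image Prod.fst ×ˢ t.image Prod.snd, (⟪θ p.1, x⟫ * ⟪φ p.2, w⟫) ^ 2 :=
      sum_le_sum_of_subset_of_nonneg subset_product fun _ _ _ => sq_nonneg _
    _ = (∑ m ∈ t.image Prod.fst, ‖⟪θ m, x⟫‖ ^ 2) * ∑ j ∈ t.image Prod.snd, ‖⟪φ j, w⟫‖ ^ 2 := by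
      simp only [sum_product, sum_mul_sum, mul_pow, Real.norm_eq_abs, sq_abs]
    _ ≤ ‖x‖ ^ 2 * ‖w‖ ^ 2 :=
      mul_le_mul (hθ.sum_inner_products_le x) (hφ.sum_inner_products_le w)
        (sum_nonneg fun _ _ => sq_nonneg _) (sq_nonneg _)
  have hcs := sum_mul_sq_le_sq_mul_sq t a fun p => ⟪θ p.1, x⟫ * ⟪φ p.2, w⟫
  rw [← hx] at hcs
  rcases (sq_nonneg ‖x‖).eq_or_lt with h0 | hpos
  · rw [← h0]
    positivity
  · refine le_of_mul_le_mul_right ?_ hpos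
    nlinarith [sum_nonneg fun p (_ : p ∈ t) => sq_nonneg (a p)]

variable [CompleteSpace E] [CompleteSpace F] (hθ : Orthonormal ℝ θ) (hφ : Orthonormal ℝ φ)
  {a : ι × κ → ℝ} (ha : Summable fun p => a p ^ 2)

def matrixRow (φ : κ → F) (a : ι × κ → ℝ) (m : ι) : F := ∑' j, a (m, j) • φ j

def matrixOp (θ : ι → E) (φ : κ → F) (a : ι × κ → ℝ) (w : F) : E :=
  ∑' m, ⟪matrixRow φ a m, w⟫ • θ m

include hφ ha

theorem hasSum_matrixRow (m : ι) : HasSum (fun j => a (m, j) • φ j) (matrixRow φ a m) :=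
  (hφ.summable_smul (ha.prod_factor m)).hasSum

theorem hasSum_inner_matrixRow (m : ι) (w : F) :
    HasSum (fun j => a (m, j) * ⟪φ j, w⟫) ⟪matrixRow φ a m, w⟫ := by
  simpa [real_inner_smul_right, real_inner_comm w] using
    (innerSL ℝ w).hasSum (hasSum_matrixRow hφ ha m)

theorem hasSum_norm_matrixRow_sq :
    HasSum (fun m => ‖matrixRow φ a m‖ ^ 2) (∑' p, a p ^ 2) :=
  ha.hasSum.prod_fiberwise fun m => hφ.hasSum_sq_of_hasSum_smul (hasSum_matrixRow hφ ha m)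

theorem summable_inner_matrixRow_sq (w : F) :
    Summable fun m => ⟪matrixRow φ a m, w⟫ ^ 2 :=
  .of_nonneg_of_le (fun _ => sq_nonneg _) (fun _ => inner_sq_le_norm_sq_mul_norm_sq _ _)
    ((hasSum_norm_matrixRow_sq hφ ha).summable.mul_right _)

include hθ

theorem hasSum_matrixOp (w : F) :
    HasSum (fun m => ⟪matrixRow φ a m, w⟫ • θ m) (matrixOp θ φ a w) :=
  (hθ.summable_smul (summable_inner_matrixRow_sq hφ ha w)).hasSum

theorem norm_matrixOp_le (w : F) : ‖matrixOp θ φ a w‖ ≤ √(∑' p, a p ^ 2) * ‖w‖ := by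
  refine (pow_le_pow_iff_left₀ (norm_nonneg _) (by positivity) two_ne_zero).1 ?_
  rw [mul_pow, Real.sq_sqrt (tsum_nonneg fun _ => sq_nonneg _),
    ← (hθ.hasSum_sq_of_hasSum_smul (hasSum_matrixOp hθ hφ ha w)).tsum_eq,
    ← (hasSum_norm_matrixRow_sq hφ ha).tsum_eq, ← tsum_mul_right]
  exact (summable_inner_matrixRow_sq hφ ha w).tsum_le_tsum
    (fun _ => inner_sq_le_norm_sq_mul_norm_sq _ _)
    ((hasSum_norm_matrixRow_sq hφ ha).summable.mul_right _)

def matrixOpL : F →L[ℝ] E :=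
  LinearMap.mkContinuous
    { toFun := matrixOp θ φ a
      map_add' := fun w w' => (hasSum_matrixOp hθ hφ ha (w + w')).unique <| by
        simpa [inner_add_right, add_smul] using
          (hasSum_matrixOp hθ hφ ha w).add (hasSum_matrixOp hθ hφ ha w')
      map_smul' := fun r w => (hasSum_matrixOp hθ hφ ha (r • w)).unique <| by
        simpa [real_inner_smul_right, smul_smul] using
          (hasSum_matrixOp hθ hφ ha w).const_smul r }
    _ (norm_matrixOp_le hθ hφ ha)

theorem hasSum_matrixOpL (w : F) :
    HasSum (fun p => (a p * ⟪φ p.2, w⟫) • θ p.1) (matrixOpL hθ hφ ha w) := by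
  have hsum : Summable fun p => (a p * ⟪φ p.2, w⟫) • θ p.1 :=
    summable_of_norm_sum_sq_le ha _ (hθ.norm_sum_smul_inner_sq_le hφ a w)
  convert hsum.hasSum
  refine (hasSum_matrixOp hθ hφ ha w).unique (hsum.hasSum.prod_fiberwise fun m => ?_)
  simpa [mul_smul] using (hasSum_inner_matrixRow hφ ha m w).smul_const (θ m)

theorem summable_norm_matrixOpL_sq {ι' : Type*} {e : ι' → F} (he : Orthonormal ℝ e) :
    Summable fun i => ‖matrixOpL hθ hφ ha (e i)‖ ^ 2 := by
  have hrow := hasSum_norm_matrixRow_sq hφ ha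
  have hbessel (s : Finset ι') (m : ι) :
      ∑ i ∈ s, ⟪matrixRow φ a m, e i⟫ ^ 2 ≤ ‖matrixRow φ a m‖ ^ 2 := by
    simpa [real_inner_comm] using he.sum_inner_products_le (matrixRow φ a m) (s := s)
  refine summable_of_sum_le (c := ∑' p, a p ^ 2) (fun _ => sq_nonneg _) fun s => ?_
  calc ∑ i ∈ s, ‖matrixOpL hθ hφ ha (e i)‖ ^ 2
      = ∑ i ∈ s, ∑' m, ⟪matrixRow φ a m, e i⟫ ^ 2 := sum_congr rfl fun i _ =>
        (hθ.hasSum_sq_of_hasSum_smul (hasSum_matrixOp hθ hφ ha (e i))).tsum_eq.symm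
    _ = ∑' m, ∑ i ∈ s, ⟪matrixRow φ a m, e i⟫ ^ 2 :=
        (Summable.tsum_finsetSum fun i _ => summable_inner_matrixRow_sq hφ ha (e i)).symm
    _ ≤ ∑' m, ‖matrixRow φ a m‖ ^ 2 :=
        Summable.tsum_le_tsum (hbessel s) (.of_nonneg_of_le (fun _ => sum_nonneg
          fun _ _ => sq_nonneg _) (hbessel s) hrow.summable) hrow.summable
    _ = ∑' p, a p ^ 2 := hrow.tsum_eq

end MatrixOperator

theorem Orthonormal.hasSum_inner_smul_apply {ι E G : Type*} [NormedAddCommGroup E]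
    [InnerProductSpace ℝ E] [CompleteSpace E] [NormedAddCommGroup G] [NormedSpace ℝ G]
    {θ : ι → E} (hθ : Orthonormal ℝ θ) (T : E →L[ℝ] G)
    (hT : ∀ r, (∀ m, ⟪θ m, r⟫ = 0) → T r = 0) (u : E) :
    HasSum (fun m => ⟪θ m, u⟫ • T (θ m)) (T u) := by
  have hS := (hθ.summable_smul (c := fun m => ⟪θ m, u⟫) (by
    simpa using hθ.inner_products_summable u)).hasSum
  have hTS : T u = T (∑' m, ⟪θ m, u⟫ • θ m) := by
    rw [← sub_eq_zero, ← map_sub]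
    exact hT _ fun m => by rw [inner_sub_right, hθ.inner_left_hasSum_smul hS, sub_self]
  simpa [hTS] using T.hasSum hS

theorem eq_inner_of_hasSum_prod {ι κ H : Type*} [NormedAddCommGroup H] [InnerProductSpace ℝ H]
    {x : ι → H} {y : κ → H} {α : ι → ℝ} {β : κ → ℝ} {X Y : H} {s : ℝ}
    (hX : HasSum (fun m => α m • x m) X) (hY : HasSum (fun j => β j • y j) Y)
    (h : HasSum (fun p : ι × κ => ⟪x p.1, y p.2⟫ * α p.1 * β p.2) s) : s = ⟪X, Y⟫ := by
  refine (h.prod_fiberwise fun m => ?_).unique (?_ : HasSum (fun m => α m * ⟪x m, Y⟫) _)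
  · simpa [real_inner_smul_right, mul_comm, mul_left_comm] using
      ((innerSL ℝ (x m)).hasSum hY).mul_left (α m)
  · simpa [real_inner_smul_right, real_inner_comm _ Y] using (innerSL ℝ Y).hasSum hX

theorem ContinuousLinearMap.apply_eq_sqrt_smul {E : Type*} [NormedAddCommGroup E]
    [InnerProductSpace ℝ E] {A : E →L[ℝ] E} (hA : ∀ w, 0 ≤ ⟪A w, w⟫) {θ : E} {lam : ℝ}
    (hlam : 0 < lam) (h : A (A θ) = lam • θ) : A θ = √lam • θ := by
  set q := A θ - √lam • θ
  -- a positive operator has no eigenvector with a negative eigenvalue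
  have hAq : A q = -√lam • q := by
    simp only [q, map_sub, map_smul, h, smul_sub, smul_smul, neg_mul, Real.mul_self_sqrt hlam.le]
    module
  have hq := hA q
  rw [hAq, real_inner_smul_left, real_inner_self_eq_norm_sq] at hq
  have hq0 : ‖q‖ ^ 2 = 0 := by nlinarith [Real.sqrt_pos.2 hlam, sq_nonneg ‖q‖]
  exact sub_eq_zero.1 (norm_eq_zero.1 (pow_eq_zero_iff two_ne_zero |>.1 hq0))

theorem summable_sq_div_mul_of_le {ι κ : Type*} {c : ι × κ → ℝ} {x : ι → ℝ} {y : κ → ℝ} {C : ℝ}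
    (hx : ∀ m, 0 ≤ x m) (hxC : ∀ m, x m ≤ C) (hy : ∀ j, 0 ≤ y j)
    (h : Summable fun p => (c p / (x p.1 * √(y p.2))) ^ 2) :
    Summable fun p => c p ^ 2 / (x p.1 * y p.2) := by
  refine .of_nonneg_of_le (fun p => div_nonneg (sq_nonneg _) (mul_nonneg (hx _) (hy _)))
    (fun p => ?_) (h.mul_left C)
  have hsplit : c p ^ 2 / (x p.1 * y p.2) = x p.1 * (c p / (x p.1 * √(y p.2))) ^ 2 := by
    rw [div_pow, mul_pow, Real.sq_sqrt (hy _)]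
    rcases eq_or_ne (x p.1) 0 with h0 | h0
    · simp [h0]
    · field_simp
  rw [hsplit]
  exact mul_le_mul_of_nonneg_right (hxC _) (sq_nonneg _)

section RandomElement

variable {Ω E F : Type*} [MeasurableSpace Ω] {P : Measure Ω} [NormedAddCommGroup E]
  [InnerProductSpace ℝ E] [NormedAddCommGroup F] [InnerProductSpace ℝ F] {Z : Ω → E} {W : Ω → F}

def innerL2 (hZ : MemLp Z 2 P) : E →L[ℝ] Lp ℝ 2 P :=
  LinearMap.mkContinuous
    { toFun := fun u => (innerSL ℝ u).compLp (hZ.toLp Z)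
      map_add' := fun u u' => by simp [ContinuousLinearMap.add_compLp]
      map_smul' := fun r u => by simp [ContinuousLinearMap.smul_compLp] }
    ‖hZ.toLp Z‖ fun u => ((innerSL ℝ u).norm_compLp_le _).trans_eq (by
      rw [innerSL_apply_norm, mul_comm])

theorem innerL2_ae_eq (hZ : MemLp Z 2 P) (u : E) : innerL2 hZ u =ᵐ[P] fun ω => ⟪u, Z ω⟫ := by
  filter_upwards [(innerSL ℝ u).coeFn_compLp (hZ.toLp Z), hZ.coeFn_toLp] with ω h1 h2
  rw [← h2, ← innerSL_apply_apply ℝ, ← h1]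
  rfl

theorem inner_innerL2 (hZ : MemLp Z 2 P) (hW : MemLp W 2 P) (u : E) (w : F) :
    ⟪innerL2 hZ u, innerL2 hW w⟫ = ∫ ω, ⟪u, Z ω⟫ * ⟪w, W ω⟫ ∂P := by
  rw [L2.inner_def]
  refine integral_congr_ae ?_
  filter_upwards [innerL2_ae_eq hZ u, innerL2_ae_eq hW w] with ω h1 h2
  simp [h1, h2, mul_comm]

end RandomElement

namespace FLR

variable {α β Ω : Type*} [MeasurableSpace α] [MeasurableSpace β] [MeasurableSpace Ω]

section CovarianceOperator

variable {μ : Measure α} {ν : Measure β} {P : Measure Ω} {Z : Ω → Lp ℝ 2 μ} {W : Ω → Lp ℝ 2 ν}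

theorem inner_covOp (hZ : MemLp Z 2 P) (hW : MemLp W 2 P) (u : Lp ℝ 2 μ) (w : Lp ℝ 2 ν) :
    ⟪u, covOp P Z W w⟫ = ⟪innerL2 hZ u, innerL2 hW w⟫ := by
  have hint : Integrable (fun ω => ⟪w, W ω⟫ • Z ω) P :=
    memLp_one_iff_integrable.1 (hZ.smul (hW.const_inner (𝕜 := ℝ) w))
  rw [covOp, ← integral_inner hint, inner_innerL2]
  simp [real_inner_smul_right, mul_comm]

theorem norm_innerL2_sq (hZ : MemLp Z 2 P) (u : Lp ℝ 2 μ) :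
    ‖innerL2 hZ u‖ ^ 2 = ⟪u, covOp P Z Z u⟫ := by
  rw [inner_covOp hZ hZ, real_inner_self_eq_norm_sq]

theorem norm_innerL2_sq_of_covOp_eq_smul (hZ : MemLp Z 2 P) {θ : Lp ℝ 2 μ} (hθ : ‖θ‖ = 1)
    {lam : ℝ} (h : covOp P Z Z θ = lam • θ) : ‖innerL2 hZ θ‖ ^ 2 = lam := by
  rw [norm_innerL2_sq, h, real_inner_smul_right, real_inner_self_eq_norm_sq, hθ]
  ring

theorem le_norm_innerL2_sq_of_covOp_eq_smul (hZ : MemLp Z 2 P) {θ : Lp ℝ 2 μ} (hθ : ‖θ‖ = 1)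
    {lam : ℝ} (h : covOp P Z Z θ = lam • θ) : lam ≤ ‖innerL2 hZ‖ ^ 2 := by
  rw [← norm_innerL2_sq_of_covOp_eq_smul hZ hθ h]
  simpa [hθ] using pow_le_pow_left₀ (norm_nonneg _) ((innerL2 hZ).le_opNorm θ) 2

theorem innerL2_eq_zero_of_covOp_eq_zero (hZ : MemLp Z 2 P) {r : Lp ℝ 2 μ}
    (h : covOp P Z Z r = 0) : innerL2 hZ r = 0 := by
  simpa [h] using norm_innerL2_sq hZ r

theorem hasSum_inner_smul_innerL2 (hZ : MemLp Z 2 P) {ι : Type*} {θ : ι → Lp ℝ 2 μ}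
    (hθ : Orthonormal ℝ θ)
    (hker : ∀ r, (∀ m, ⟪θ m, r⟫ = 0) → covOp P Z Z r = 0) (u : Lp ℝ 2 μ) :
    HasSum (fun m => ⟪θ m, u⟫ • innerL2 hZ (θ m)) (innerL2 hZ u) :=
  hθ.hasSum_inner_smul_apply _ (fun r hr => innerL2_eq_zero_of_covOp_eq_zero hZ (hker r hr)) u

end CovarianceOperator

theorem correlation_operator_hilbertSchmidt_factorization_general
    (a₁ b₁ a₂ b₂ : ℝ) {Ω : Type*} [MeasurableSpace Ω]
    (P : Measure Ω)
    (X : Ω → Lp ℝ 2 (leb a₁ b₁)) (Y : Ω → Lp ℝ 2 (leb a₂ b₂))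
    (hXm : AEStronglyMeasurable X P) (hYm : AEStronglyMeasurable Y P)
    (hX2 : Integrable (fun ω => ‖X ω‖ ^ 2) P) (hY2 : Integrable (fun ω => ‖Y ω‖ ^ 2) P)
    (θ : ℕ → Lp ℝ 2 (leb a₁ b₁)) (φ : ℕ → Lp ℝ 2 (leb a₂ b₂))
    (lamX lamY : ℕ → ℝ)
    (hθon : Orthonormal ℝ θ) (hφon : Orthonormal ℝ φ)
    (hlamX : ∀ m, 0 < lamX m) (hlamY : ∀ j, 0 < lamY j)
    (hθeig : ∀ m, covOp P X X (θ m) = lamX m • θ m)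
    (hφeig : ∀ j, covOp P Y Y (φ j) = lamY j • φ j)
    (hθspan : ∀ u, covOp P X X u = 0 ↔ ∀ m, ⟪θ m, u⟫ = 0)
    (hφspan : ∀ v, covOp P Y Y v = 0 ↔ ∀ j, ⟪φ j, v⟫ = 0)
    (hC2 : Summable (fun mj : ℕ × ℕ =>
      ((∫ ω, ⟪θ mj.1, X ω⟫ * ⟪φ mj.2, Y ω⟫ ∂P) / (lamX mj.1 * Real.sqrt (lamY mj.2))) ^ 2))
    (sqXX : Lp ℝ 2 (leb a₁ b₁) →L[ℝ] Lp ℝ 2 (leb a₁ b₁))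
    (sqYY : Lp ℝ 2 (leb a₂ b₂) →L[ℝ] Lp ℝ 2 (leb a₂ b₂))
    (hsqXX : ∀ w, sqXX (sqXX w) = covOp P X X w)
    (hsqXXsa : ∀ w w', ⟪sqXX w, w'⟫ = ⟪w, sqXX w'⟫)
    (hsqXXpos : ∀ w, 0 ≤ ⟪sqXX w, w⟫)
    (hsqYY : ∀ w, sqYY (sqYY w) = covOp P Y Y w)
    (hsqYYsa : ∀ w w', ⟪sqYY w, w'⟫ = ⟪w, sqYY w'⟫)
    (hsqYYpos : ∀ w, 0 ≤ ⟪sqYY w, w⟫) :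
    Summable (fun mj : ℕ × ℕ =>
      (∫ ω, ⟪θ mj.1, X ω⟫ * ⟪φ mj.2, Y ω⟫ ∂P) ^ 2 / (lamX mj.1 * lamY mj.2)) ∧
    ∃ R : Lp ℝ 2 (leb a₂ b₂) →L[ℝ] Lp ℝ 2 (leb a₁ b₁),
      (∀ w, HasSum (fun mj : ℕ × ℕ =>
        ((∫ ω, ⟪θ mj.1, X ω⟫ * ⟪φ mj.2, Y ω⟫ ∂P) / Real.sqrt (lamX mj.1 * lamY mj.2) *
          ⟪φ mj.2, w⟫) • θ mj.1) (R w)) ∧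
      (∀ e : ℕ → Lp ℝ 2 (leb a₂ b₂), Orthonormal ℝ e → Summable (fun i => ‖R (e i)‖ ^ 2)) ∧
      (∀ w, covOp P X Y w = sqXX (R (sqYY w))) := by
  have hX : MemLp X 2 P := (memLp_two_iff_integrable_sq_norm hXm).2 hX2
  have hY : MemLp Y 2 P := (memLp_two_iff_integrable_sq_norm hYm).2 hY2
  have hc (m j : ℕ) : ∫ ω, ⟪θ m, X ω⟫ * ⟪φ j, Y ω⟫ ∂P = ⟪innerL2 hX (θ m), innerL2 hY (φ j)⟫ :=
    (inner_innerL2 hX hY _ _).symm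
  have hsum := summable_sq_div_mul_of_le (fun m => (hlamX m).le)
    (fun m => le_norm_innerL2_sq_of_covOp_eq_smul hX (hθon.1 m) (hθeig m))
    (fun j => (hlamY j).le) hC2
  have ha : Summable fun p : ℕ × ℕ =>
      ((∫ ω, ⟪θ p.1, X ω⟫ * ⟪φ p.2, Y ω⟫ ∂P) / √(lamX p.1 * lamY p.2)) ^ 2 := by
    simpa [div_pow, Real.sq_sqrt (mul_nonneg (hlamX _).le (hlamY _).le)] using hsum
  refine ⟨hsum, matrixOpL hθon hφon ha, hasSum_matrixOpL hθon hφon ha,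
    fun e he => summable_norm_matrixOpL_sq hθon hφon ha he, fun w => ext_inner_left ℝ fun u => ?_⟩
  have hsqX (m : ℕ) : sqXX (θ m) = √(lamX m) • θ m :=
    sqXX.apply_eq_sqrt_smul hsqXXpos (hlamX m) (by rw [hsqXX, hθeig])
  have hsqY (j : ℕ) : sqYY (φ j) = √(lamY j) • φ j :=
    sqYY.apply_eq_sqrt_smul hsqYYpos (hlamY j) (by rw [hsqYY, hφeig])
  rw [← hsqXXsa, inner_covOp hX hY]
  refine (eq_inner_of_hasSum_prod (hasSum_inner_smul_innerL2 hX hθon (fun r => (hθspan r).2) u)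
    (hasSum_inner_smul_innerL2 hY hφon (fun r => (hφspan r).2) w) ?_).symm
  refine ((innerSL ℝ (sqXX u)).hasSum (hasSum_matrixOpL hθon hφon ha (sqYY w))).congr_fun
    fun p => ?_
  rw [innerSL_apply_apply, real_inner_smul_right, hsqXXsa, hsqX, ← hsqYYsa, hsqY,
    real_inner_smul_right, real_inner_smul_left, hc, Real.sqrt_mul (hlamX _).le,
    real_inner_comm (θ p.1) u]
  have := Real.sqrt_pos.2 (hlamX p.1)
  have := Real.sqrt_pos.2 (hlamY p.2)
  field_simp

/-- assume Condition (C2).  Then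
`∑_{m,j} (E[ξ_m ζ_j])²/(λ_Xm λ_Yj) < ∞`, so that
`R v = ∑_{m,j} (E[ξ_m ζ_j]/(λ_Xm λ_Yj)^{1/2}) ⟨φ_j, v⟩ θ_m` defines a Hilbert–Schmidt
operator `R : L²(T₂) → L²(T₁)`, and `R_XY = R_XX^{1/2} ∘ R ∘ R_YY^{1/2}`. -/
theorem correlation_operator_hilbertSchmidt_factorization
    (a₁ b₁ a₂ b₂ : ℝ) {Ω : Type*} [MeasurableSpace Ω]
    (P : Measure Ω) [IsProbabilityMeasure P]
    (X : Ω → Lp ℝ 2 (leb a₁ b₁)) (Y : Ω → Lp ℝ 2 (leb a₂ b₂))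
    (hXm : AEStronglyMeasurable X P) (hYm : AEStronglyMeasurable Y P)
    (hX2 : Integrable (fun ω => ‖X ω‖ ^ 2) P) (hY2 : Integrable (fun ω => ‖Y ω‖ ^ 2) P)
    (hX0 : ∀ u, ∫ ω, ⟪u, X ω⟫ ∂P = 0) (hY0 : ∀ v, ∫ ω, ⟪v, Y ω⟫ ∂P = 0)
    (θ : ℕ → Lp ℝ 2 (leb a₁ b₁)) (φ : ℕ → Lp ℝ 2 (leb a₂ b₂))
    (lamX lamY : ℕ → ℝ)
    (hθon : Orthonormal ℝ θ) (hφon : Orthonormal ℝ φ)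
    (hlamX : ∀ m, 0 < lamX m) (hlamY : ∀ j, 0 < lamY j)
    (hθeig : ∀ m, covOp P X X (θ m) = lamX m • θ m)
    (hφeig : ∀ j, covOp P Y Y (φ j) = lamY j • φ j)
    (hθspan : ∀ u, covOp P X X u = 0 ↔ ∀ m, ⟪θ m, u⟫ = 0)
    (hφspan : ∀ v, covOp P Y Y v = 0 ↔ ∀ j, ⟪φ j, v⟫ = 0)
    (hC2 : Summable (fun mj : ℕ × ℕ =>
      ((∫ ω, ⟪θ mj.1, X ω⟫ * ⟪φ mj.2, Y ω⟫ ∂P) / (lamX mj.1 * Real.sqrt (lamY mj.2))) ^ 2))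
    (sqXX : Lp ℝ 2 (leb a₁ b₁) →L[ℝ] Lp ℝ 2 (leb a₁ b₁))
    (sqYY : Lp ℝ 2 (leb a₂ b₂) →L[ℝ] Lp ℝ 2 (leb a₂ b₂))
    (hsqXX : ∀ w, sqXX (sqXX w) = covOp P X X w)
    (hsqXXsa : ∀ w w', ⟪sqXX w, w'⟫ = ⟪w, sqXX w'⟫)
    (hsqXXpos : ∀ w, 0 ≤ ⟪sqXX w, w⟫)
    (hsqYY : ∀ w, sqYY (sqYY w) = covOp P Y Y w)
    (hsqYYsa : ∀ w w', ⟪sqYY w, w'⟫ = ⟪w, sqYY w'⟫)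
    (hsqYYpos : ∀ w, 0 ≤ ⟪sqYY w, w⟫) :
    Summable (fun mj : ℕ × ℕ =>
      (∫ ω, ⟪θ mj.1, X ω⟫ * ⟪φ mj.2, Y ω⟫ ∂P) ^ 2 / (lamX mj.1 * lamY mj.2)) ∧
    ∃ R : Lp ℝ 2 (leb a₂ b₂) →L[ℝ] Lp ℝ 2 (leb a₁ b₁),
      (∀ w, HasSum (fun mj : ℕ × ℕ =>
        ((∫ ω, ⟪θ mj.1, X ω⟫ * ⟪φ mj.2, Y ω⟫ ∂P) / Real.sqrt (lamX mj.1 * lamY mj.2) *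
          ⟪φ mj.2, w⟫) • θ mj.1) (R w)) ∧
      (∀ e : ℕ → Lp ℝ 2 (leb a₂ b₂), Orthonormal ℝ e → Summable (fun i => ‖R (e i)‖ ^ 2)) ∧
      (∀ w, covOp P X Y w = sqXX (R (sqYY w))) :=
  correlation_operator_hilbertSchmidt_factorization_general a₁ b₁ a₂ b₂ P X Y hXm hYm hX2 hY2 θ φ
    lamX lamY hθon hφon hlamX hlamY hθeig hφeig hθspan hφspan hC2 sqXX sqYY hsqXX hsqXXsa hsqXXpos
    hsqYY hsqYYsa hsqYYpos

end FLR
end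
end
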